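/- arXiv:2306.16279 — 6 statements merged into one kernel-verified Lean document; each statement's English description precedes it below -/
import Mathlib

section
/- Let p, m be coprime with 1 < p < m and a, b integers with 0 < a < p and 0 < b < m. Then pm - am - bp is not an element of the numerical semigroup ⟨p,m⟩. -/
theorem standard_form_is_gap
    (p m : ℕ) (hcop : Nat.Coprime p m) (hp : 1 < p) (hpm : p < m)
    (a b : ℤ) (ha0 : 0 < a) (hap : a < p) (hb0 : 0 < b) (hbm : b < m) :
    ¬ ∃ x y : ℕ, (p : ℤ) * m - a * m - b * p = (x : ℤ) * p + (y : ℤ) * m := by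
  rintro ⟨x, y, h⟩
  have hp0 : (0:ℤ) < p := by exact_mod_cast Nat.lt_of_lt_of_le Nat.zero_lt_one (le_of_lt hp)
  have hm0 : (0:ℤ) < m := by exact_mod_cast Nat.lt_of_lt_of_le (Nat.zero_lt_one.trans hp) (le_of_lt hpm)
  have hx0 : (0:ℤ) ≤ x := Int.ofNat_nonneg x
  have hy0 : (0:ℤ) ≤ y := Int.ofNat_nonneg y
  have hcz : IsCoprime (p:ℤ) (m:ℤ) := Nat.isCoprime_iff_coprime.mpr hcop
  have hd1 : (p:ℤ) ∣ ((y:ℤ) + a) * m := ⟨(m:ℤ) - x - b, by linarith [h]⟩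
  have hd2 : (m:ℤ) ∣ ((x:ℤ) + b) * p := ⟨(p:ℤ) - y - a, by linarith [h]⟩
  have h1 : (p:ℤ) ≤ (y:ℤ) + a :=
    Int.le_of_dvd (by linarith) (hcz.dvd_of_dvd_mul_right hd1)
  have h2 : (m:ℤ) ≤ (x:ℤ) + b :=
    Int.le_of_dvd (by linarith) (hcz.symm.dvd_of_dvd_mul_right hd2)
  nlinarith [mul_le_mul_of_nonneg_right h1 (le_of_lt hm0),
    mul_le_mul_of_nonneg_right h2 (le_of_lt hp0)]
end

section
/- Let p, m be coprime with 1 < p < m, with Euclidean algorithm quotients k_i, remainders p_i (p_s = 1, k_s := p_{s-1}), and convergents A_i, B_i as usual. Let u ≤ h ≤ s, and let α_u, …, α_h be integers with 0 ≤ α_i ≤ k_i and α_h > 0. Set x = Σ_{i=u}^h (-1)^{i+1} α_i A_i. Then x > 0 if and only if h is odd. -/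
/-!
Write `T_j = ∑_{i=u}^{j} (-1)^(i+j) α_i A_i`, the alternating sum whose top term is positive, so that
`x = (-1)^(h+1) T_h` and `T_{j+1} = α_{j+1} A_{j+1} - T_j`. Together with
`A_{j+2} = A_j + k_{j+1} A_{j+1}` and `0 ≤ α_i ≤ k_i`, induction gives
`-(A_j - A_{j mod 2}) ≤ T_j ≤ A_{j+1} - A_{(j+1) mod 2}`. As `α_h ≥ 1`, the upper bound at `h - 1`
yields `T_h ≥ A_h - T_{h-1} ≥ A_{h mod 2}`, which is `A_1 = 1` for odd `h`, while for even `h` it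
gives `x = -T_h ≤ -A_0 = 0`.
-/

open Finset

def altSum (u : ℕ) (α A : ℕ → ℕ) (j : ℕ) : ℤ :=
  ∑ i ∈ Icc u j, (-1 : ℤ) ^ (i + j) * (α i : ℤ) * (A i : ℤ)

section
variable {k A α : ℕ → ℕ} {u j : ℕ}

lemma altSum_succ (hu : u ≤ j + 1) :
    altSum u α A (j + 1) = α (j + 1) * A (j + 1) - altSum u α A j := by
  have htop : (-1 : ℤ) ^ (j + 1 + (j + 1)) = 1 := (Even.add_self (j + 1)).neg_one_pow
  rw [altSum, sum_Icc_succ_top hu, htop, one_mul, altSum, sub_eq_neg_add, ← sum_neg_distrib]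
  congr 1
  refine sum_congr rfl fun i _ => ?_
  rw [← add_assoc, pow_succ]
  ring

lemma altSum_of_lt (hj : j < u) : altSum u α A j = 0 := by
  simp [altSum, Icc_eq_empty_of_lt hj]

lemma sum_neg_one_pow_eq_altSum (h : ℕ) :
    ∑ i ∈ Icc u h, (-1 : ℤ) ^ (i + 1) * (α i : ℤ) * (A i : ℤ) = (-1) ^ (h + 1) * altSum u α A h := by
  rw [altSum, mul_sum]
  refine sum_congr rfl fun i _ => ?_
  have hsq : ((-1 : ℤ) ^ h) ^ 2 = 1 := by rw [← pow_mul, pow_mul', neg_one_sq, one_pow]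
  linear_combination -((-1 : ℤ) ^ (i + 1) * α i * A i) * hsq

theorem altSum_bounds (hA0 : A 0 = 0)
    (hA : ∀ i, 1 ≤ i → i ≤ j → A (i + 1) = A (i - 1) + k i * A i)
    (hαk : ∀ i ∈ Icc u j, α i ≤ k i) :
    -((A j : ℤ) - A (j % 2)) ≤ altSum u α A j ∧
      altSum u α A j ≤ (A (j + 1) : ℤ) - A ((j + 1) % 2) := by
  induction j with
  | zero =>
    have : altSum u α A 0 = 0 := by
      rcases Nat.eq_zero_or_pos u with rfl | hu
      · simp [altSum, hA0]
      · exact altSum_of_lt hu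
    simp [this]
  | succ j ih =>
    obtain ⟨ihl, ihu⟩ := ih (fun i h1 h2 => hA i h1 (by omega))
      (fun i hi => hαk i (by simp only [mem_Icc] at hi ⊢; omega))
    have hrec : (A (j + 2) : ℤ) = A j + k (j + 1) * A (j + 1) := by
      exact_mod_cast hA (j + 1) (by omega) le_rfl
    have hmod : (j + 1 + 1) % 2 = j % 2 := by omega
    rw [hmod]
    rcases le_or_gt u (j + 1) with hu | hu
    · have hα : (α (j + 1) : ℤ) * A (j + 1) ≤ k (j + 1) * A (j + 1) :=
        mul_le_mul_of_nonneg_right (by exact_mod_cast hαk _ (by simp [hu])) (by positivity)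
      have hαA : (0 : ℤ) ≤ α (j + 1) * A (j + 1) := by positivity
      rw [altSum_succ hu]
      constructor <;> linarith
    · have hkA : (0 : ℤ) ≤ k (j + 1) * A (j + 1) := by positivity
      rw [altSum_of_lt (by omega : j < u)] at ihl ihu
      rw [altSum_of_lt hu]
      constructor <;> linarith

theorem le_altSum_of_pos {h : ℕ} (hA0 : A 0 = 0)
    (hA : ∀ i, 1 ≤ i → i < h → A (i + 1) = A (i - 1) + k i * A i)
    (hαk : ∀ i ∈ Ico u h, α i ≤ k i) (huh : u ≤ h) (hαh : 0 < α h) :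
    (A (h % 2) : ℤ) ≤ altSum u α A h := by
  have hA_le : (A h : ℤ) ≤ α h * A h :=
    le_mul_of_one_le_left (by positivity) (by exact_mod_cast hαh)
  cases h with
  | zero => simp [altSum, Nat.le_zero.mp huh, hA0]
  | succ j =>
    have hj := (altSum_bounds (u := u) (j := j) hA0 (fun i h1 h2 => hA i h1 (by omega))
      (fun i hi => hαk i (by simp only [mem_Icc, mem_Ico] at hi ⊢; omega))).2
    rw [altSum_succ huh]
    linarith

end

theorem alternating_sum_A_pos_iff_odd_general
    (s : ℕ) (k A : ℕ → ℕ)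
    (hA0 : A 0 = 0) (hA1 : A 1 = 1)
    (hArec : ∀ i, 1 ≤ i → i ≤ s - 1 → A (i + 1) = A (i - 1) + k i * A i)
    (u h : ℕ) (huh : u ≤ h) (hhs : h ≤ s)
    (α : ℕ → ℕ) (hαk : ∀ i ∈ Finset.Icc u h, α i ≤ k i) (hαh : 0 < α h) :
    0 < ∑ i ∈ Finset.Icc u h, (-1 : ℤ) ^ (i + 1) * (α i : ℤ) * (A i : ℤ) ↔ Odd h := by
  have hlow := le_altSum_of_pos hA0 (fun i h1 h2 => hArec i h1 (by omega))
    (fun i hi => hαk i (Ico_subset_Icc_self hi)) huh hαh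
  rw [sum_neg_one_pow_eq_altSum]
  rcases Nat.even_or_odd h with he | ho
  · rw [Nat.even_iff.mp he, hA0] at hlow
    rw [he.add_one.neg_one_pow, neg_one_mul]
    exact iff_of_false (by linarith) (Nat.not_odd_iff_even.mpr he)
  · rw [Nat.odd_iff.mp ho, hA1, Nat.cast_one] at hlow
    rw [ho.add_one.neg_one_pow, one_mul]
    exact iff_of_true (by linarith) ho

theorem alternating_sum_A_pos_iff_odd
    (p m s : ℕ) (k P A : ℕ → ℕ)
    (hcop : Nat.Coprime p m) (hp : 1 < p) (hpm : p < m) (hs : 1 ≤ s)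
    (hP0 : P 0 = p)
    (hm : m = k 0 * P 0 + P 1)
    (hrec : ∀ i, 1 ≤ i → i ≤ s - 1 → P (i - 1) = k i * P i + P (i + 1))
    (hdec : ∀ i, 1 ≤ i → i ≤ s → P i < P (i - 1))
    (hPs : P s = 1)
    (hks : k s = P (s - 1))
    (hA0 : A 0 = 0) (hA1 : A 1 = 1)
    (hArec : ∀ i, 1 ≤ i → i ≤ s - 1 → A (i + 1) = A (i - 1) + k i * A i)
    (u h : ℕ) (huh : u ≤ h) (hhs : h ≤ s)
    (α : ℕ → ℕ) (hαk : ∀ i ∈ Finset.Icc u h, α i ≤ k i) (hαh : 0 < α h) :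
    0 < ∑ i ∈ Finset.Icc u h, (-1 : ℤ) ^ (i + 1) * (α i : ℤ) * (A i : ℤ) ↔ Odd h :=
  alternating_sum_A_pos_iff_odd_general s k A hA0 hA1 hArec u h huh hhs α hαk hαh
end

section
/- Let p, m be coprime with 1 < p < m, with Euclidean data k_i, p_i, B_i as usual (k_s := p_{s-1}). Let u ≤ h ≤ s and integers 0 ≤ α_i ≤ k_i with α_h > 0, and set y = Σ_{i=u}^h (-1)^i α_i B_i. Then y > 0 if and only if h is even. -/
/-!
Write `S v` for the partial sum over `u ≤ i ≤ v`. Because `B (i + 1) = B (i - 1) + k i * B i`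
and `0 ≤ α i ≤ k i`, the positive terms of `S v` are dominated by a telescoping sum and so are
the negative ones: `-B v < S v ≤ B (v + 1)` for even `v` and `-B (v + 1) < S v ≤ B v` for odd `v`.
The last term `(-1) ^ h * α h * B h` has absolute value at least `B h`, so it decides the sign.
-/

open Finset

structure IsContinuantSeq (k B : ℕ → ℕ) (s : ℕ) : Prop where
  zero : B 0 = 1
  one : B 1 = k 0
  step : ∀ i, 1 ≤ i → i ≤ s - 1 → B (i + 1) = B (i - 1) + k i * B i

namespace IsContinuantSeq

variable {k B : ℕ → ℕ} {s : ℕ}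

theorem add_two (hB : IsContinuantSeq k B s) {i : ℕ} (hi : i + 2 ≤ s) :
    B (i + 2) = B i + k (i + 1) * B (i + 1) :=
  hB.step (i + 1) (by omega) (by omega)

theorem pos (hB : IsContinuantSeq k B s) (hk0 : 0 < k 0) : ∀ i ≤ s, 0 < B i := by
  intro i
  induction i using Nat.twoStepInduction with
  | zero => simp [hB.zero]
  | one => exact fun _ => hB.one ▸ hk0
  | more i ih _ =>
    intro hi
    rw [hB.add_two hi]
    exact Nat.add_pos_left (ih (by omega)) _

theorem mul_le_succ (hB : IsContinuantSeq k B s) {i : ℕ} (hi : i + 1 ≤ s) :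
    k i * B i ≤ B (i + 1) := by
  rcases i with _ | i
  · simp [hB.zero, hB.one]
  · rw [hB.add_two hi]
    exact Nat.le_add_left _ _

theorem mul_lt_succ (hB : IsContinuantSeq k B s) (hk0 : 0 < k 0) {i : ℕ} (hi0 : 1 ≤ i)
    (hi : i + 1 ≤ s) : k i * B i < B (i + 1) := by
  obtain ⟨i, rfl⟩ := Nat.exists_eq_add_of_le' hi0
  rw [hB.add_two hi]
  exact Nat.lt_add_of_pos_left (hB.pos hk0 i (by omega))

variable {α : ℕ → ℕ} {u : ℕ}

theorem alternating_sum_le (hB : IsContinuantSeq k B s) {v : ℕ} (huv : u ≤ v)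
    (hv : v + 1 ≤ s) (hα : ∀ i ∈ Icc u v, α i ≤ k i) :
    (Even v → ∑ i ∈ Icc u v, (-1 : ℤ) ^ i * α i * B i ≤ B (v + 1)) ∧
      (Odd v → ∑ i ∈ Icc u v, (-1 : ℤ) ^ i * α i * B i ≤ B v) := by
  induction v, huv using Nat.le_induction with
  | base =>
    have hαB : (α u : ℤ) * B u ≤ B (u + 1) := by
      exact_mod_cast (Nat.mul_le_mul_right _ (hα u (by simp))).trans (hB.mul_le_succ hv)
    rw [Icc_self, sum_singleton]
    refine ⟨fun he => ?_, fun ho => ?_⟩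
    · rwa [he.neg_one_pow, one_mul]
    · rw [ho.neg_one_pow]
      nlinarith
  | succ v huv ih =>
    obtain ⟨ihe, iho⟩ := ih (by omega) fun i hi => hα i (Icc_subset_Icc_right (by omega) hi)
    have hαB : (α (v + 1) : ℤ) * B (v + 1) ≤ k (v + 1) * B (v + 1) := by
      exact_mod_cast Nat.mul_le_mul_right _ (hα (v + 1) (mem_Icc.mpr ⟨by omega, le_rfl⟩))
    have hrec : (B (v + 2) : ℤ) = B v + k (v + 1) * B (v + 1) := by exact_mod_cast hB.add_two hv
    rw [sum_Icc_succ_top (by omega)]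
    refine ⟨fun he => ?_, fun ho => ?_⟩
    · have hvo : Odd v := by simpa [Nat.even_add_one] using he
      rw [he.neg_one_pow, one_mul]
      linarith [iho hvo]
    · have hve : Even v := by simpa [Nat.odd_add_one] using ho
      rw [ho.neg_one_pow]
      nlinarith [ihe hve]

theorem lt_alternating_sum (hB : IsContinuantSeq k B s) (hk0 : 0 < k 0) {v : ℕ} (huv : u ≤ v)
    (hv : v + 1 ≤ s) (hα : ∀ i ∈ Icc u v, α i ≤ k i) :
    (Even v → -(B v : ℤ) < ∑ i ∈ Icc u v, (-1 : ℤ) ^ i * α i * B i) ∧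
      (Odd v → -(B (v + 1) : ℤ) < ∑ i ∈ Icc u v, (-1 : ℤ) ^ i * α i * B i) := by
  induction v, huv using Nat.le_induction with
  | base =>
    have hBu : (0 : ℤ) < B u := by exact_mod_cast hB.pos hk0 u (by omega)
    rw [Icc_self, sum_singleton]
    refine ⟨fun he => ?_, fun ho => ?_⟩
    · rw [he.neg_one_pow, one_mul]
      nlinarith
    · have hαB : (α u : ℤ) * B u < B (u + 1) := by
        exact_mod_cast (Nat.mul_le_mul_right _ (hα u (by simp))).trans_lt
          (hB.mul_lt_succ hk0 ho.pos hv)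
      rw [ho.neg_one_pow]
      linarith
  | succ v huv ih =>
    obtain ⟨ihe, iho⟩ := ih (by omega) fun i hi => hα i (Icc_subset_Icc_right (by omega) hi)
    have hαB : (α (v + 1) : ℤ) * B (v + 1) ≤ k (v + 1) * B (v + 1) := by
      exact_mod_cast Nat.mul_le_mul_right _ (hα (v + 1) (mem_Icc.mpr ⟨by omega, le_rfl⟩))
    have hrec : (B (v + 2) : ℤ) = B v + k (v + 1) * B (v + 1) := by exact_mod_cast hB.add_two hv
    rw [sum_Icc_succ_top (by omega)]
    refine ⟨fun he => ?_, fun ho => ?_⟩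
    · have hvo : Odd v := by simpa [Nat.even_add_one] using he
      rw [he.neg_one_pow, one_mul]
      nlinarith [iho hvo]
    · have hve : Even v := by simpa [Nat.odd_add_one] using ho
      rw [ho.neg_one_pow]
      linarith [ihe hve]

theorem alternating_sum_pos_iff_even (hB : IsContinuantSeq k B s) (hk0 : 0 < k 0) {h : ℕ}
    (huh : u ≤ h) (hhs : h ≤ s) (hα : ∀ i ∈ Icc u h, α i ≤ k i) (hαh : 0 < α h) :
    0 < ∑ i ∈ Icc u h, (-1 : ℤ) ^ i * α i * B i ↔ Even h := by
  have hBh : (0 : ℤ) < B h := by exact_mod_cast hB.pos hk0 h hhs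
  have hαBh : (B h : ℤ) ≤ α h * B h := le_mul_of_one_le_left hBh.le (by exact_mod_cast hαh)
  obtain rfl | hlt := huh.eq_or_lt
  · rw [Icc_self, sum_singleton]
    rcases Nat.even_or_odd u with he | ho
    · simp only [he, he.neg_one_pow, one_mul, iff_true]
      linarith
    · simp only [Nat.not_even_iff_odd.mpr ho, ho.neg_one_pow, iff_false, not_lt]
      linarith
  · obtain ⟨v, rfl⟩ := Nat.exists_eq_add_of_lt hlt
    have hα' : ∀ i ∈ Icc u (u + v), α i ≤ k i :=
      fun i hi => hα i (Icc_subset_Icc_right (by omega) hi)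
    rw [sum_Icc_succ_top (by omega)]
    rcases Nat.even_or_odd (u + v) with he | ho
    · have hle := (hB.alternating_sum_le (by omega) (by omega) hα').1 he
      have hho : ¬Even (u + v + 1) := by simpa [Nat.even_add_one] using he
      simp only [hho, (Nat.not_even_iff_odd.mp hho).neg_one_pow, iff_false, not_lt]
      linarith
    · have hlt' := (hB.lt_alternating_sum hk0 (by omega) (by omega) hα').2 ho
      have hhe : Even (u + v + 1) := by simpa [Nat.even_add_one] using ho
      simp only [hhe, hhe.neg_one_pow, one_mul, iff_true]
      linarith

end IsContinuantSeq

theorem alternating_sum_B_pos_iff_even_general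
    (p m s : ℕ) (k P B : ℕ → ℕ)
    (hpm : p < m) (hs : 1 ≤ s)
    (hP0 : P 0 = p)
    (hm : m = k 0 * P 0 + P 1)
    (hdec : ∀ i, 1 ≤ i → i ≤ s → P i < P (i - 1))
    (hB0 : B 0 = 1) (hB1 : B 1 = k 0)
    (hBrec : ∀ i, 1 ≤ i → i ≤ s - 1 → B (i + 1) = B (i - 1) + k i * B i)
    (u h : ℕ) (huh : u ≤ h) (hhs : h ≤ s)
    (α : ℕ → ℕ) (hαk : ∀ i ∈ Finset.Icc u h, α i ≤ k i) (hαh : 0 < α h) :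
    0 < ∑ i ∈ Finset.Icc u h, (-1 : ℤ) ^ i * (α i : ℤ) * (B i : ℤ) ↔ Even h := by
  have hk0 : 0 < k 0 := by
    have hP1 : P 1 < P 0 := hdec 1 le_rfl hs
    by_contra! hk0
    simp only [Nat.le_zero.mp hk0, zero_mul, zero_add] at hm
    omega
  exact IsContinuantSeq.alternating_sum_pos_iff_even ⟨hB0, hB1, hBrec⟩ hk0 huh hhs hαk hαh

theorem alternating_sum_B_pos_iff_even
    (p m s : ℕ) (k P B : ℕ → ℕ)
    (hcop : Nat.Coprime p m) (hp : 1 < p) (hpm : p < m) (hs : 1 ≤ s)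
    (hP0 : P 0 = p)
    (hm : m = k 0 * P 0 + P 1)
    (hrec : ∀ i, 1 ≤ i → i ≤ s - 1 → P (i - 1) = k i * P i + P (i + 1))
    (hdec : ∀ i, 1 ≤ i → i ≤ s → P i < P (i - 1))
    (hPs : P s = 1)
    (hks : k s = P (s - 1))
    (hB0 : B 0 = 1) (hB1 : B 1 = k 0)
    (hBrec : ∀ i, 1 ≤ i → i ≤ s - 1 → B (i + 1) = B (i - 1) + k i * B i)
    (u h : ℕ) (huh : u ≤ h) (hhs : h ≤ s)
    (α : ℕ → ℕ) (hαk : ∀ i ∈ Finset.Icc u h, α i ≤ k i) (hαh : 0 < α h) :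
    0 < ∑ i ∈ Finset.Icc u h, (-1 : ℤ) ^ i * (α i : ℤ) * (B i : ℤ) ↔ Even h :=
  alternating_sum_B_pos_iff_even_general p m s k P B hpm hs hP0 hm hdec hB0 hB1 hBrec u h huh hhs α
    hαk hαh
end

section
/- Let p, m be coprime with 1 < p < m, s the number of Euclidean algorithm steps for (m,p), p_j the remainders, and k_i the quotients, with k_s := p_{s-1}. Any integer r with 0 < r < p_j (for some 0 ≤ j < s) can be written as r = Σ_{i=j+1}^h α_i p_i with integers α_i satisfying 0 ≤ α_i ≤ k_i, α_h > 0, and the property that α_i = k_i implies α_{i+1} = 0 (where p_s = 1). -/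
/-!
Divide `r < P j = k (j+1) P (j+1) + P (j+2)` by `P (j+1)`: since `P (j+2) < P (j+1)` the quotient is
at most `k (j+1)`, and the remainder `r' < P (j+1)` is expanded in the later remainders by downward
induction on `j`, which ends at `P s = 1`, where `k s = P (s-1)`. If the quotient equals `k (j+1)`,
then `r' < P (j+2)`, so the expansion of `r'` has no `P (j+2)` term.
-/

open Finset

theorem Nat.div_le_of_lt_mul_add {r b k c : ℕ} (hcb : c ≤ b) (hr : r < k * b + c) : r / b ≤ k :=
  Nat.lt_succ_iff.mp <| Nat.div_lt_of_lt_mul <| by linarith [mul_comm b k]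

theorem Nat.mod_lt_of_div_eq_of_lt_mul_add {r b k c : ℕ} (hq : r / b = k) (hr : r < k * b + c) :
    r % b < c := by
  have := Nat.div_add_mod r b
  rw [hq] at this
  linarith [mul_comm b k]

/-- The expansion `r = ∑_{i=j+1}^{h} α_i p_i` of Definition 4.2 of the paper. -/
structure IsGreedyExpansion (k P : ℕ → ℕ) (j h r : ℕ) (α : ℕ → ℕ) : Prop where
  succ_le : j + 1 ≤ h
  sum_eq : r = ∑ i ∈ Icc (j + 1) h, α i * P i
  le_quotient : ∀ i ∈ Icc (j + 1) h, α i ≤ k i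
  last_pos : 0 < α h
  succ_eq_zero_of_eq : ∀ i, j + 1 ≤ i → i < h → α i = k i → α (i + 1) = 0

namespace IsGreedyExpansion

variable {k P : ℕ → ℕ} {j h r : ℕ} {α : ℕ → ℕ}

theorem single {q : ℕ} (hq : 0 < q) (hqk : q ≤ k (j + 1)) :
    IsGreedyExpansion k P j (j + 1) (q * P (j + 1)) fun _ ↦ q where
  succ_le := le_rfl
  sum_eq := by rw [Icc_self, sum_singleton]
  le_quotient i hi := by
    obtain rfl : i = j + 1 := by simpa using hi
    exact hqk
  last_pos := hq
  succ_eq_zero_of_eq i hi hih := absurd hih (by omega)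

theorem first_mul_le (e : IsGreedyExpansion k P j h r α) : α (j + 1) * P (j + 1) ≤ r := by
  rw [e.sum_eq]
  exact single_le_sum (f := fun i ↦ α i * P i) (fun _ _ ↦ Nat.zero_le _)
    (mem_Icc.mpr ⟨le_rfl, e.succ_le⟩)

theorem cons (e : IsGreedyExpansion k P (j + 1) h r α) {q : ℕ} (hqk : q ≤ k (j + 1))
    (hr : q = k (j + 1) → r < P (j + 2)) :
    IsGreedyExpansion k P j h (q * P (j + 1) + r) (Function.update α (j + 1) q) := by
  have hh := e.succ_le
  have update_eq {i : ℕ} (hi : j + 1 < i) : Function.update α (j + 1) q i = α i :=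
    Function.update_of_ne (by omega) _ _
  refine ⟨by omega, ?_, fun i hi ↦ ?_, ?_, fun i hi hih hik ↦ ?_⟩
  · rw [← insert_Icc_add_one_left_eq_Icc (by omega), sum_insert (by simp), e.sum_eq,
      Function.update_self]
    congr 1
    exact sum_congr rfl fun i hi ↦ by rw [update_eq (by simp at hi; omega)]
  · rcases (mem_Icc.mp hi).1.eq_or_lt with rfl | hi'
    · rwa [Function.update_self]
    · rw [update_eq hi']
      exact e.le_quotient i (mem_Icc.mpr ⟨hi', (mem_Icc.mp hi).2⟩)
  · rw [update_eq (by omega)]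
    exact e.last_pos
  · rw [update_eq (by omega)]
    rcases hi.eq_or_lt with rfl | hi'
    · -- `α (j+2) * P (j+2) ≤ r < P (j+2)` forces `α (j+2) = 0`
      have hlt := hr (by rwa [Function.update_self] at hik)
      have hle := e.first_mul_le
      by_contra hne
      exact absurd (hle.trans_lt hlt) (not_lt.mpr (Nat.le_mul_of_pos_left _ (by omega)))
    · rw [update_eq hi'] at hik
      exact e.succ_eq_zero_of_eq i hi' hih hik

end IsGreedyExpansion

theorem exists_isGreedyExpansion {s : ℕ} {k P : ℕ → ℕ}
    (hrec : ∀ i, 1 ≤ i → i ≤ s - 1 → P (i - 1) = k i * P i + P (i + 1))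
    (hdec : ∀ i, 1 ≤ i → i ≤ s → P i < P (i - 1))
    (hPs : P s = 1) (hks : k s = P (s - 1)) {j r : ℕ} (hj : j < s) (hr : 0 < r) (hrP : r < P j) :
    ∃ α h, h ≤ s ∧ IsGreedyExpansion k P j h r α := by
  have hs : s - 1 + 1 = s := by omega
  induction Nat.le_sub_one_of_lt hj using Nat.decreasingInduction generalizing r with
  | self =>
    refine ⟨fun _ ↦ r, s, le_rfl, ?_⟩
    have e := IsGreedyExpansion.single (P := P) hr (hrP.le.trans_eq (hs ▸ hks).symm)
    rwa [hs, hPs, mul_one] at e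
  | of_succ j hj ih =>
    have hPj : P j = k (j + 1) * P (j + 1) + P (j + 2) := by
      simpa using hrec (j + 1) le_add_self (by omega)
    have hP : P (j + 2) < P (j + 1) := by simpa using hdec (j + 2) le_add_self (by omega)
    rw [hPj] at hrP
    have hqk := Nat.div_le_of_lt_mul_add hP.le hrP
    have hrem := fun hq ↦ Nat.mod_lt_of_div_eq_of_lt_mul_add hq hrP
    rw [← Nat.div_add_mod' r (P (j + 1))] at hr ⊢
    rcases Nat.eq_zero_or_pos (r % P (j + 1)) with hr' | hr'
    · rw [hr', add_zero] at hr ⊢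
      exact ⟨_, j + 1, by omega, .single (Nat.pos_of_mul_pos_right hr) hqk⟩
    · obtain ⟨α, h, hhs, e⟩ := ih (by omega) hr' (Nat.mod_lt r (by omega))
      exact ⟨_, h, hhs, e.cons hqk hrem⟩

theorem greedy_expansion_in_remainders_general
    (s : ℕ) (k P : ℕ → ℕ)
    (hrec : ∀ i, 1 ≤ i → i ≤ s - 1 → P (i - 1) = k i * P i + P (i + 1))
    (hdec : ∀ i, 1 ≤ i → i ≤ s → P i < P (i - 1))
    (hPs : P s = 1)
    (hks : k s = P (s - 1)) :
    ∀ r j : ℕ, j < s → 0 < r → r < P j →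
      ∃ (α : ℕ → ℕ) (h : ℕ), j + 1 ≤ h ∧ h ≤ s ∧
        r = ∑ i ∈ Finset.Icc (j + 1) h, α i * P i ∧
        (∀ i ∈ Finset.Icc (j + 1) h, α i ≤ k i) ∧
        0 < α h ∧
        (∀ i, j + 1 ≤ i → i < h → α i = k i → α (i + 1) = 0) := by
  intro r j hj hr hrP
  obtain ⟨α, h, hhs, e⟩ := exists_isGreedyExpansion hrec hdec hPs hks hj hr hrP
  exact ⟨α, h, e.succ_le, hhs, e.sum_eq, e.le_quotient, e.last_pos, e.succ_eq_zero_of_eq⟩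

theorem greedy_expansion_in_remainders
    (p m s : ℕ) (k P : ℕ → ℕ)
    (hcop : Nat.Coprime p m) (hp : 1 < p) (hpm : p < m) (hs : 1 ≤ s)
    (hP0 : P 0 = p)
    (hm : m = k 0 * P 0 + P 1)
    (hrec : ∀ i, 1 ≤ i → i ≤ s - 1 → P (i - 1) = k i * P i + P (i + 1))
    (hdec : ∀ i, 1 ≤ i → i ≤ s → P i < P (i - 1))
    (hPs : P s = 1)
    (hks : k s = P (s - 1)) :
    ∀ r j : ℕ, j < s → 0 < r → r < P j →
      ∃ (α : ℕ → ℕ) (h : ℕ), j + 1 ≤ h ∧ h ≤ s ∧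
        r = ∑ i ∈ Finset.Icc (j + 1) h, α i * P i ∧
        (∀ i ∈ Finset.Icc (j + 1) h, α i ≤ k i) ∧
        0 < α h ∧
        (∀ i, j + 1 ≤ i → i < h → α i = k i → α (i + 1) = 0) :=
  greedy_expansion_in_remainders_general s k P hrec hdec hPs hks
end

section
/- Let p, m be coprime with 1 < p < m, s odd, Euclidean data as usual with k_s = p_{s-1} > 1 and A_{s-1} > 1. Then in Delorme's algorithm for Γ = ⟨p,m⟩ starting from g₁ = p + m + 1 (in standard form g₁ = pm - ((k_s-1)A_s + A_{s-1} - 1)m - (B_s - 1)p), the smallest γ ∈ Γ \ {0} such that g₁ + γ ∈ Γ is γ₁ = (B_s - 1)p. -/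
set_option maxHeartbeats 1000000 in
theorem first_collision_gamma_one
    (p m s : ℕ) (k P A B : ℕ → ℕ)
    (hcop : Nat.Coprime p m) (hp : 1 < p) (hpm : p < m) (hs : 1 ≤ s)
    (hsodd : Odd s)
    (hP0 : P 0 = p)
    (hm : m = k 0 * P 0 + P 1)
    (hrec : ∀ i, 1 ≤ i → i ≤ s - 1 → P (i - 1) = k i * P i + P (i + 1))
    (hdec : ∀ i, 1 ≤ i → i ≤ s → P i < P (i - 1))
    (hPs : P s = 1)
    (hks : k s = P (s - 1)) (hks1 : 1 < k s)
    (hA0 : A 0 = 0) (hA1 : A 1 = 1) (hB0 : B 0 = 1) (hB1 : B 1 = k 0)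
    (hArec : ∀ i, 1 ≤ i → i ≤ s - 1 → A (i + 1) = A (i - 1) + k i * A i)
    (hBrec : ∀ i, 1 ≤ i → i ≤ s - 1 → B (i + 1) = B (i - 1) + k i * B i)
    (hAs1 : 1 < A (s - 1)) :
    0 < (B s - 1) * p ∧
    (∃ a b : ℕ, (B s - 1) * p = a * p + b * m) ∧
    (∃ a b : ℕ, (p + m + 1) + (B s - 1) * p = a * p + b * m) ∧
    (∀ γ : ℕ, (∃ a b : ℕ, γ = a * p + b * m) → 0 < γ →
      (∃ a b : ℕ, (p + m + 1) + γ = a * p + b * m) → (B s - 1) * p ≤ γ) := by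
  have hs2 : 2 ≤ s := by
    by_contra h
    have hs1 : s = 1 := by omega
    rw [hs1] at hAs1
    simp [hA0] at hAs1
  have hk0 : 1 ≤ k 0 := by
    have h1 : P 1 < P 0 := hdec 1 le_rfl hs
    rcases Nat.eq_zero_or_pos (k 0) with h | h
    · rw [h] at hm; simp at hm; omega
    · exact h
  have hk : ∀ i, 1 ≤ i → i ≤ s - 1 → 1 ≤ k i := by
    intro i h1 h2
    rcases Nat.eq_zero_or_pos (k i) with h | h
    · exfalso
      have e := hrec i h1 h2
      rw [h] at e
      have d1 := hdec i h1 (by omega)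
      have d2 := hdec (i + 1) (by omega) (by omega)
      simp at e d2
      omega
    · exact h
  -- the key simultaneous induction
  have key : ∀ i, i ≤ s - 1 →
      (1 ≤ B i ∧ 1 ≤ B (i + 1)) ∧
      (A (i + 1) * P i + A i * P (i + 1) = p ∧ B (i + 1) * P i + B i * P (i + 1) = m) ∧
      ((A i : ℤ) * m - B i * p = (-1) ^ (i + 1) * P i ∧
       (A (i + 1) : ℤ) * m - B (i + 1) * p = (-1) ^ (i + 2) * P (i + 1)) := by
    intro i
    induction i with
    | zero =>
      intro _
      have hmz : (m : ℤ) = k 0 * p + P 1 := by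
        have : m = k 0 * p + P 1 := by rw [hm, hP0]
        exact_mod_cast this
      refine ⟨⟨by rw [hB0], by rw [hB1]; exact hk0⟩, ⟨?_, ?_⟩, ?_, ?_⟩
      · rw [hA1, hA0, hP0]; ring
      · rw [hB1, hB0, hP0, hm, hP0]; ring
      · simp [hA0, hB0, hP0]
      · rw [hA1, hB1]; push_cast; rw [hmz]; ring
    | succ i ih =>
      intro hi
      obtain ⟨⟨hBipos, hBi1pos⟩, ⟨hAP, hBP⟩, hS1, hS2⟩ := ih (by omega)
      have h1 : 1 ≤ i + 1 := by omega
      have hA' := hArec (i + 1) h1 hi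
      have hB' := hBrec (i + 1) h1 hi
      have hP' := hrec (i + 1) h1 hi
      simp only [Nat.add_sub_cancel] at hA' hB' hP'
      have hPz : (P i : ℤ) = k (i + 1) * P (i + 1) + P (i + 2) := by exact_mod_cast hP'
      refine ⟨⟨hBi1pos, ?_⟩, ⟨?_, ?_⟩, hS2, ?_⟩
      · rw [hB']; exact le_trans hBipos (Nat.le_add_right _ _)
      · rw [hA']
        calc (A i + k (i + 1) * A (i + 1)) * P (i + 1) + A (i + 1) * P (i + 2)
            = A (i + 1) * (k (i + 1) * P (i + 1) + P (i + 2)) + A i * P (i + 1) := by ring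
          _ = A (i + 1) * P i + A i * P (i + 1) := by rw [← hP']
          _ = p := hAP
      · rw [hB']
        calc (B i + k (i + 1) * B (i + 1)) * P (i + 1) + B (i + 1) * P (i + 2)
            = B (i + 1) * (k (i + 1) * P (i + 1) + P (i + 2)) + B i * P (i + 1) := by ring
          _ = B (i + 1) * P i + B i * P (i + 1) := by rw [← hP']
          _ = m := hBP
      · rw [hA', hB']
        push_cast
        rcases Nat.even_or_odd i with he | ho
        · have e1 : ((-1 : ℤ)) ^ (i + 1) = -1 := he.add_one.neg_one_pow
          have e2 : ((-1 : ℤ)) ^ (i + 2) = 1 := by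
            have : Even (i + 2) := by rcases he with ⟨t, ht⟩; exact ⟨t + 1, by omega⟩
            exact this.neg_one_pow
          have e3 : ((-1 : ℤ)) ^ (i + 1 + 2) = -1 := by
            have : Odd (i + 1 + 2) := by rcases he with ⟨t, ht⟩; exact ⟨t + 1, by omega⟩
            exact this.neg_one_pow
          rw [e1] at hS1; rw [e2] at hS2; rw [e3]
          linear_combination hS1 + (k (i + 1) : ℤ) * hS2 - hPz
        · have e1' : ((-1 : ℤ)) ^ (i + 1) = 1 := by
            have : Even (i + 1) := ho.add_one
            exact this.neg_one_pow
          have e2 : ((-1 : ℤ)) ^ (i + 2) = -1 := by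
            have : Odd (i + 2) := by rcases ho with ⟨t, ht⟩; exact ⟨t + 1, by omega⟩
            exact this.neg_one_pow
          have e3 : ((-1 : ℤ)) ^ (i + 1 + 2) = 1 := by
            have : Even (i + 1 + 2) := by rcases ho with ⟨t, ht⟩; exact ⟨t + 2, by omega⟩
            exact this.neg_one_pow
          rw [e1'] at hS1; rw [e2] at hS2; rw [e3]
          linear_combination hS1 + (k (i + 1) : ℤ) * hS2 + hPz
  -- extract data at i = s - 1
  obtain ⟨⟨hBs1pos, hBspos⟩, ⟨hApair, hBpair⟩, hSs1, hSs⟩ := key (s - 1) le_rfl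
  have hss : s - 1 + 1 = s := by omega
  rw [hss] at hBspos hApair hBpair hSs hSs1
  -- hSs1 : (A (s-1)) * m - B (s-1) * p = (-1)^s * P (s-1)
  have e2 : (B (s - 1) : ℤ) * p = A (s - 1) * m + k s := by
    rw [hsodd.neg_one_pow, ← hks] at hSs1
    linarith
  have hexp : ((-1 : ℤ)) ^ (s - 1 + 2) = 1 := by
    have : Even (s - 1 + 2) := by
      rcases hsodd with ⟨t, ht⟩; exact ⟨t + 1, by omega⟩
    exact this.neg_one_pow
  have e0 : (A s : ℤ) * m = B s * p + 1 := by
    rw [hexp, hPs] at hSs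
    push_cast at hSs
    linarith
  have hpe : k s * A s + A (s - 1) = p := by
    rw [← hks, hPs] at hApair
    linarith [hApair]
  have hme : k s * B s + B (s - 1) = m := by
    rw [← hks, hPs] at hBpair
    linarith [hBpair]
  -- B s ≥ 2, A s ≥ 2
  obtain ⟨⟨hBs2pos, _⟩, _, _⟩ := key (s - 2) (by omega)
  have hs11 : s - 1 - 1 = s - 2 := by omega
  have hk1 : 1 ≤ k (s - 1) := hk (s - 1) (by omega) le_rfl
  have hBseq := hBrec (s - 1) (by omega) le_rfl
  rw [hss, hs11] at hBseq
  have hAseq := hArec (s - 1) (by omega) le_rfl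
  rw [hss, hs11] at hAseq
  have hBs2 : 2 ≤ B s := by
    have h := Nat.mul_le_mul hk1 hBs1pos
    calc 2 = 1 + 1 * 1 := by norm_num
      _ ≤ B (s - 2) + k (s - 1) * B (s - 1) := Nat.add_le_add hBs2pos h
      _ = B s := hBseq.symm
  have hAs2 : 2 ≤ A s := by
    have h := Nat.mul_le_mul hk1 (le_refl (A (s - 1)))
    calc 2 ≤ A (s - 1) := hAs1
      _ = 1 * A (s - 1) := (one_mul _).symm
      _ ≤ k (s - 1) * A (s - 1) := h
      _ ≤ A (s - 2) + k (s - 1) * A (s - 1) := Nat.le_add_left _ _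
      _ = A s := hAseq.symm
  have hpA : 2 * A s + 2 ≤ p := by
    have h := Nat.mul_le_mul hks1 (le_refl (A s))
    calc 2 * A s + 2 ≤ k s * A s + A (s - 1) := Nat.add_le_add h hAs1
      _ = p := hpe
  have e0n : A s * m = B s * p + 1 := by
    have : ((A s * m : ℕ) : ℤ) = ((B s * p + 1 : ℕ) : ℤ) := by push_cast; linarith [e0]
    exact_mod_cast this
  refine ⟨?_, ⟨B s - 1, 0, by ring⟩, ⟨0, A s + 1, ?_⟩, ?_⟩
  · have h1 : 0 < B s - 1 := by omega
    exact Nat.mul_pos h1 (by omega)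
  · have hsub : B s - 1 + 1 = B s := by omega
    calc (p + m + 1) + (B s - 1) * p = ((B s - 1) + 1) * p + m + 1 := by ring
      _ = B s * p + m + 1 := by rw [hsub]
      _ = A s * m + m := by rw [e0n]; ring
      _ = 0 * p + (A s + 1) * m := by ring
  · -- minimality
    have reduce : ∀ b a : ℕ, ∃ a' b', a * p + b * m = a' * p + b' * m ∧ b' < p := by
      intro b
      induction b using Nat.strong_induction_on with
      | _ b ih =>
        intro a
        by_cases hb : b < p
        · exact ⟨a, b, rfl, hb⟩
        · push_neg at hb
          obtain ⟨c, rfl⟩ := Nat.exists_eq_add_of_le hb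
          obtain ⟨a', b', h, hlt⟩ := ih c (by omega) (a + m)
          exact ⟨a', b', by rw [← h]; ring, hlt⟩
    rintro γ ⟨a0, b0, hγ⟩ _ ⟨a1, b1, hg1⟩
    obtain ⟨a, b, hab, hb⟩ := reduce b0 a0
    obtain ⟨a', b', hab', hb'⟩ := reduce b1 a1
    have hγ2 : (γ : ℤ) = a * p + b * m := by exact_mod_cast hγ.trans hab
    have hg2 : ((p : ℤ) + m + 1) + γ = a' * p + b' * m := by exact_mod_cast hg1.trans hab'
    have hZ : ((a' : ℤ) - a - 1 + B s) * p = ((b : ℤ) + 1 + A s - b') * m := by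
      linear_combination hγ2 - hg2 - e0
    have hcopZ : IsCoprime (p : ℤ) (m : ℤ) := by
      rw [Nat.isCoprime_iff_coprime]; exact hcop
    have hdvd : (p : ℤ) ∣ ((b : ℤ) + 1 + A s - b') := by
      apply hcopZ.dvd_of_dvd_mul_right
      exact ⟨(a' : ℤ) - a - 1 + B s, by linarith [hZ]⟩
    obtain ⟨t, ht⟩ := hdvd
    have hpZ : (0 : ℤ) < p := by exact_mod_cast Nat.lt_of_lt_of_le Nat.zero_lt_one hp.le
    have hbZ : (b : ℤ) < p := by exact_mod_cast hb
    have hb'Z : (b' : ℤ) < p := by exact_mod_cast hb'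
    have hAsp : (A s : ℤ) ≤ p - 2 := by
      have : (2 * A s + 2 : ℤ) ≤ p := by exact_mod_cast hpA
      have hA0' : (0 : ℤ) ≤ A s := by positivity
      linarith
    have hb'0 : (0 : ℤ) ≤ b' := by positivity
    have hb0' : (0 : ℤ) ≤ b := by positivity
    have ht01 : t = 0 ∨ t = 1 := by
      have h1 : (p : ℤ) * t < 2 * p := by rw [← ht]; linarith
      have h2 : -(p : ℤ) < p * t := by rw [← ht]; linarith
      have h3 : t < 2 := by
        by_contra hc
        push_neg at hc
        have h5 : (p : ℤ) * 2 ≤ p * t := mul_le_mul_of_nonneg_left hc (le_of_lt hpZ)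
        linarith
      have h4 : -1 < t := by
        by_contra hc
        push_neg at hc
        have h5 : (p : ℤ) * t ≤ p * (-1) := mul_le_mul_of_nonneg_left hc (le_of_lt hpZ)
        linarith
      omega
    have hBs1le : 1 ≤ B s := by omega
    zify [hBs1le]
    have ha0 : (0 : ℤ) ≤ a' := by positivity
    have hmZ0 : (0 : ℤ) ≤ m := by positivity
    rcases ht01 with rfl | rfl
    · -- t = 0 : a ≥ B s - 1
      have hY : ((b : ℤ) + 1 + A s - b') = 0 := by rw [ht]; ring
      have hX : ((a' : ℤ) - a - 1 + B s) = 0 := by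
        rcases mul_eq_zero.mp (by rw [hZ, hY]; ring : ((a' : ℤ) - a - 1 + B s) * p = 0) with h | h
        · exact h
        · exfalso; linarith
      have haB : ((B s : ℤ) - 1) ≤ a := by linarith
      have h1 : ((B s : ℤ) - 1) * p ≤ a * p := by
        apply mul_le_mul_of_nonneg_right haB (le_of_lt hpZ)
      linarith [h1, mul_nonneg hb0' hmZ0, hγ2]
    · -- t = 1 : b ≥ p - 1 - A s
      have hbge : ((p : ℤ) - 1 - A s) ≤ b := by
        have : ((b : ℤ) + 1 + A s - b') = p := by rw [ht]; ring
        linarith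
      have hmZ : (m : ℤ) = k s * B s + B (s - 1) := by exact_mod_cast hme.symm
      have hksZ : (2 : ℤ) ≤ k s := by exact_mod_cast hks1
      have hAs1Z : (2 : ℤ) ≤ A (s - 1) := by exact_mod_cast hAs1
      have hBsZ : (1 : ℤ) ≤ B s := by exact_mod_cast hBs1le
      have hh1 : (2 : ℤ) * (B s * p) ≤ k s * (B s * p) := by
        apply mul_le_mul_of_nonneg_right hksZ
        positivity
      have hh2 : (2 : ℤ) * m ≤ A (s - 1) * m := by
        apply mul_le_mul_of_nonneg_right hAs1Z hmZ0
      have hh3 : (p : ℤ) * m = k s * (B s * p) + B (s - 1) * p := by rw [hmZ]; ring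
      have hfin : ((B s : ℤ) - 1) * p ≤ ((p : ℤ) - 1 - A s) * m := by
        linarith [hh1, hh2, hh3, e2, e0, hksZ]
      have hbm : ((p : ℤ) - 1 - A s) * m ≤ b * m := mul_le_mul_of_nonneg_right hbge hmZ0
      have hap : (0 : ℤ) ≤ (a : ℤ) * p := by positivity
      linarith
end

section
/- Let p, m be coprime with 1 < p < m, Γ = ⟨p,m⟩, and let a, b be integers with 0 < a < p and 0 < b < m and am < bp. Then pm - am - bp + am = pm - bp ∈ Γ, and for every γ ∈ Γ with 0 < γ < am, the number pm - am - bp + γ is not in Γ. -/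
theorem minimal_collision_from_standard_form
    (p m : ℕ) (hcop : Nat.Coprime p m) (hp : 1 < p) (hpm : p < m)
    (a b : ℤ) (ha0 : 0 < a) (hap : a < p) (hb0 : 0 < b) (hbm : b < m)
    (hmin : a * m < b * p) :
    (∃ x y : ℕ, ((p : ℤ) * m - a * m - b * p) + a * m = (x : ℤ) * p + (y : ℤ) * m) ∧
    (∀ γ : ℤ, (∃ x y : ℕ, γ = (x : ℤ) * p + (y : ℤ) * m) → 0 < γ → γ < a * m →
      ¬ ∃ x y : ℕ, ((p : ℤ) * m - a * m - b * p) + γ = (x : ℤ) * p + (y : ℤ) * m) := by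
  have hm0 : (0:ℤ) < m := by exact_mod_cast (by omega : 0 < m)
  have hp0 : (0:ℤ) < p := by exact_mod_cast Nat.lt_of_lt_of_le Nat.zero_lt_one hp.le
  constructor
  · refine ⟨((m : ℤ) - b).toNat, 0, ?_⟩
    have h : (((m : ℤ) - b).toNat : ℤ) = (m : ℤ) - b := Int.toNat_of_nonneg (by linarith)
    rw [h]; push_cast; ring
  · rintro γ ⟨x, y, rfl⟩ h0 h1 ⟨x', y', heq⟩
    have hx0 : (0:ℤ) ≤ (x:ℤ) := Int.natCast_nonneg x
    have hy0 : (0:ℤ) ≤ (y:ℤ) := Int.natCast_nonneg y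
    have hx'0 : (0:ℤ) ≤ (x':ℤ) := Int.natCast_nonneg x'
    have hy'0 : (0:ℤ) ≤ (y':ℤ) := Int.natCast_nonneg y'
    -- y < a
    have hya : (y:ℤ) < a := by
      have : (y:ℤ) * m < a * m := by nlinarith
      exact lt_of_mul_lt_mul_right this hm0.le
    -- x < b
    have hxb : (x:ℤ) < b := by
      have : (x:ℤ) * p < b * p := by nlinarith
      exact lt_of_mul_lt_mul_right this hp0.le
    have key : ((x':ℤ) - x + b) * p = ((p:ℤ) - a + y - y') * m := by linarith
    have hcop' : IsCoprime (m:ℤ) (p:ℤ) := by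
      rw [Int.isCoprime_iff_gcd_eq_one]
      exact_mod_cast hcop.symm
    have hdvd : (m:ℤ) ∣ ((x':ℤ) - x + b) := by
      refine hcop'.dvd_of_dvd_mul_right ⟨((p:ℤ) - a + y - y'), ?_⟩
      linarith [key]
    obtain ⟨k, hk⟩ := hdvd
    have hcancel : (k:ℤ) * p = (p:ℤ) - a + y - y' := by
      have h2 : (m:ℤ) * (k * p) = (m:ℤ) * ((p:ℤ) - a + y - y') := by
        rw [hk] at key; linarith [key]
      exact mul_left_cancel₀ (ne_of_gt hm0) h2
    rcases le_or_gt 1 k with hk1 | hk1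
    · have : (p:ℤ) ≤ k * p := by nlinarith
      linarith
    · have hk0 : k ≤ 0 := by linarith
      have : (m:ℤ) * k ≤ 0 := mul_nonpos_of_nonneg_of_nonpos hm0.le hk0
      linarith
end
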